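/- Let d ∈ ℕ and let k ≥ 3 be an integer, ℓ := ⌊d/2⌋ + k + 1, and let Ψ_{ℓ,k}(x) := ψ_{ℓ,k}(‖x‖₂) be the radial Wendland function on ℝ^d. Then for all 1 ≤ i, j ≤ d with i ≠ j, ∂_i ∂_j Δ² Ψ_{ℓ,k}(x − y)|_{x = y} = 0; equivalently, ∂_i ∂_j Δ² Ψ_{ℓ,k}(0) = 0, where Δ² is the bi-Laplacian. -/

import Mathlib

open MeasureTheory

/-- Partial derivative `∂_i f` on `ℝ^d`. -/
noncomputable def pd {d : ℕ} (i : Fin d) (f : EuclideanSpace ℝ (Fin d) → ℝ) :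
    EuclideanSpace ℝ (Fin d) → ℝ :=
  fun x => fderiv ℝ f x (EuclideanSpace.single i 1)

/-- The Laplacian `Δf = Σ_i ∂_i ∂_i f` on `ℝ^d`. -/
noncomputable def lapl {d : ℕ} (f : EuclideanSpace ℝ (Fin d) → ℝ) :
    EuclideanSpace ℝ (Fin d) → ℝ :=
  fun x => ∑ i : Fin d, pd i (pd i f) x

/-- The Wendland function
`ψ_{ℓ,k}(r) = (1/(Γ(k) 2^{k-1})) ∫_r^1 s (1-s)^ℓ (s²-r²)^{k-1} ds` for `0 ≤ r ≤ 1`,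
and `0` for `r > 1`. -/
noncomputable def wend (ℓ k : ℕ) (r : ℝ) : ℝ :=
  if r ≤ 1 then
    (1 / (Real.Gamma k * 2 ^ (k - 1))) *
      ∫ s in r..1, s * (1 - s) ^ ℓ * (s ^ 2 - r ^ 2) ^ (k - 1)
  else 0

/-!
Reflecting coordinate `j` fixes the origin and every radial function, commutes with the
Laplacian, negates `∂_j` and commutes with `∂_i` for `i ≠ j`. Hence `∂_i ∂_j Δ² Ψ` is odd under
the reflection and vanishes at the origin; translating handles `x - y`.
No smoothness of `ψ` is needed: `fderiv` commutes with composition by a linear equivalence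
or a translation unconditionally.
-/

namespace EuclideanSpace

variable {d : ℕ}

noncomputable def reflectCoord (j : Fin d) :
    EuclideanSpace ℝ (Fin d) ≃ₗᵢ[ℝ] EuclideanSpace ℝ (Fin d) :=
  LinearIsometryEquiv.piLpCongrRight 2
    (fun m => if m = j then LinearIsometryEquiv.neg ℝ else LinearIsometryEquiv.refl ℝ ℝ)

theorem reflectCoord_apply (j : Fin d) (x : EuclideanSpace ℝ (Fin d)) (m : Fin d) :
    reflectCoord j x m = if m = j then -x m else x m := by
  simp only [reflectCoord, LinearIsometryEquiv.piLpCongrRight_apply]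
  split_ifs <;> rfl

theorem reflectCoord_single_self (j : Fin d) :
    reflectCoord j (single j 1) = -single j 1 := by
  ext m
  by_cases h : m = j <;> simp [reflectCoord_apply, h]

theorem reflectCoord_single_of_ne {j m : Fin d} (h : m ≠ j) :
    reflectCoord j (single m 1) = single m 1 := by
  ext n
  by_cases hn : n = j
  · subst hn
    simp [reflectCoord_apply, Ne.symm h]
  · simp [reflectCoord_apply, hn]

theorem comp_reflectCoord_of_radial (j : Fin d) (g : ℝ → ℝ) :
    (fun x : EuclideanSpace ℝ (Fin d) => g ‖x‖) ∘ reflectCoord j = fun x => g ‖x‖ := by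
  ext x
  simp

end EuclideanSpace

open EuclideanSpace

variable {d : ℕ}

theorem pd_neg (m : Fin d) (f : EuclideanSpace ℝ (Fin d) → ℝ) : pd m (-f) = -pd m f := by
  ext x
  simp [pd, fderiv_neg]

theorem pd_comp_sub (m : Fin d) (f : EuclideanSpace ℝ (Fin d) → ℝ)
    (y : EuclideanSpace ℝ (Fin d)) :
    pd m (fun x => f (x - y)) = fun x => pd m f (x - y) := by
  ext x
  simp only [pd, fderiv_comp_sub]

theorem lapl_comp_sub (f : EuclideanSpace ℝ (Fin d) → ℝ) (y : EuclideanSpace ℝ (Fin d)) :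
    lapl (fun x => f (x - y)) = fun x => lapl f (x - y) := by
  ext x
  simp only [lapl, pd_comp_sub]

theorem pd_comp_linearIsometryEquiv (m : Fin d) (f : EuclideanSpace ℝ (Fin d) → ℝ)
    (A : EuclideanSpace ℝ (Fin d) ≃ₗᵢ[ℝ] EuclideanSpace ℝ (Fin d))
    (x : EuclideanSpace ℝ (Fin d)) :
    pd m (f ∘ A) x = fderiv ℝ f (A x) (A (single m 1)) := by
  simp only [pd, ← LinearIsometryEquiv.coe_toContinuousLinearEquiv,
    ContinuousLinearEquiv.comp_right_fderiv, ContinuousLinearMap.comp_apply,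
    ContinuousLinearEquiv.coe_coe]

theorem pd_comp_reflectCoord_self (j : Fin d) (f : EuclideanSpace ℝ (Fin d) → ℝ) :
    pd j (f ∘ reflectCoord j) = -(pd j f ∘ reflectCoord j) := by
  ext x
  rw [pd_comp_linearIsometryEquiv, reflectCoord_single_self, map_neg]
  rfl

theorem pd_comp_reflectCoord_of_ne {i j : Fin d} (hij : i ≠ j)
    (f : EuclideanSpace ℝ (Fin d) → ℝ) :
    pd i (f ∘ reflectCoord j) = pd i f ∘ reflectCoord j := by
  ext x
  rw [pd_comp_linearIsometryEquiv, reflectCoord_single_of_ne hij]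
  rfl

theorem lapl_comp_reflectCoord (j : Fin d) (f : EuclideanSpace ℝ (Fin d) → ℝ) :
    lapl (f ∘ reflectCoord j) = lapl f ∘ reflectCoord j := by
  ext x
  refine Finset.sum_congr rfl fun m _ => ?_
  rcases eq_or_ne m j with rfl | hm
  · rw [pd_comp_reflectCoord_self, pd_neg, pd_comp_reflectCoord_self, neg_neg]
    rfl
  · rw [pd_comp_reflectCoord_of_ne hm, pd_comp_reflectCoord_of_ne hm]
    rfl

theorem pd_pd_eq_zero_of_comp_reflectCoord {i j : Fin d} (hij : i ≠ j)
    {f : EuclideanSpace ℝ (Fin d) → ℝ} (hf : f ∘ reflectCoord j = f) :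
    pd i (pd j f) 0 = 0 := by
  have hodd : pd i (pd j f) = -(pd i (pd j f) ∘ reflectCoord j) := by
    conv_lhs => rw [← hf, pd_comp_reflectCoord_self, pd_neg, pd_comp_reflectCoord_of_ne hij]
  have h0 := congrFun hodd 0
  simp only [Pi.neg_apply, Function.comp_apply, map_zero] at h0
  linarith

theorem stmt8_general
    (d k : ℕ)
    (i j : Fin d) (hij : i ≠ j) :
    (∀ y : EuclideanSpace ℝ (Fin d),
      pd i (pd j (lapl (lapl
        (fun x : EuclideanSpace ℝ (Fin d) => wend (d / 2 + k + 1) k ‖x - y‖)))) y = 0) ∧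
    pd i (pd j (lapl (lapl
      (fun x : EuclideanSpace ℝ (Fin d) => wend (d / 2 + k + 1) k ‖x‖)))) 0 = 0 := by
  set Ψ : EuclideanSpace ℝ (Fin d) → ℝ := fun x => wend (d / 2 + k + 1) k ‖x‖
  have hΨ : Ψ ∘ reflectCoord j = Ψ := comp_reflectCoord_of_radial j _
  have hΔΔΨ : lapl (lapl Ψ) ∘ reflectCoord j = lapl (lapl Ψ) := by
    rw [← lapl_comp_reflectCoord, ← lapl_comp_reflectCoord, hΨ]
  have h0 := pd_pd_eq_zero_of_comp_reflectCoord hij hΔΔΨ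
  refine ⟨fun y => ?_, h0⟩
  rw [lapl_comp_sub Ψ y, lapl_comp_sub, pd_comp_sub, pd_comp_sub]
  simpa only [sub_self] using h0

/-- for the radial Wendland function `Ψ_{ℓ,k}(x) = ψ_{ℓ,k}(‖x‖₂)` on `ℝ^d` with
`k ≥ 3` and `ℓ = ⌊d/2⌋ + k + 1`, the mixed second partials of the bi-Laplacian vanish at
coincident points: `∂_i ∂_j Δ² Ψ_{ℓ,k}(x-y)|_{x=y} = 0` for `i ≠ j`; equivalently
`∂_i ∂_j Δ² Ψ_{ℓ,k}(0) = 0`. -/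
theorem stmt8
    (d k : ℕ) (hd : 0 < d) (hk : 3 ≤ k)
    (i j : Fin d) (hij : i ≠ j) :
    (∀ y : EuclideanSpace ℝ (Fin d),
      pd i (pd j (lapl (lapl
        (fun x : EuclideanSpace ℝ (Fin d) => wend (d / 2 + k + 1) k ‖x - y‖)))) y = 0) ∧
    pd i (pd j (lapl (lapl
      (fun x : EuclideanSpace ℝ (Fin d) => wend (d / 2 + k + 1) k ‖x‖)))) 0 = 0 :=
  stmt8_general d k i j hij
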